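/- arXiv:1611.02595 — 7 statements merged into one kernel-verified Lean document; each statement's English description precedes it below -/
import Mathlib

section
/- Let f, g : ℝ → ℝ be smooth, a,b,c,d ∈ ℝ with ad−bc ≠ 0, and set z(x,y) = f(ax+by)+g(cx+dy), K(x,y) = (ad−bc)² f''(ax+by) g''(cx+dy), H(x,y) = ((a²+b²)f''(ax+by) + (c²+d²)g''(cx+dy))/2. If K_x H_y − K_y H_x = 0 identically, then for all u, v: [(a²+b²)f''(u) − (c²+d²)g''(v)] · f'''(u) · g'''(v) = 0. -/
theorem stmt1 (f g : ℝ → ℝ) (hf : ContDiff ℝ (⊤ : ℕ∞) f) (hg : ContDiff ℝ (⊤ : ℕ∞) g)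
    (a b c d : ℝ) (h : a * d - b * c ≠ 0)
    (K H : ℝ → ℝ → ℝ)
    (hK : ∀ x y, K x y = (a * d - b * c) ^ 2 * iteratedDeriv 2 f (a * x + b * y) *
      iteratedDeriv 2 g (c * x + d * y))
    (hH : ∀ x y, H x y = ((a ^ 2 + b ^ 2) * iteratedDeriv 2 f (a * x + b * y) +
      (c ^ 2 + d ^ 2) * iteratedDeriv 2 g (c * x + d * y)) / 2)
    (hW : ∀ x y,
      deriv (fun t => K t y) x * deriv (fun t => H x t) y -
        deriv (fun t => K x t) y * deriv (fun t => H t y) x = 0) :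
    ∀ u v, ((a ^ 2 + b ^ 2) * iteratedDeriv 2 f u - (c ^ 2 + d ^ 2) * iteratedDeriv 2 g v) *
      iteratedDeriv 3 f u * iteratedDeriv 3 g v = 0 := by
  have hFd : ∀ x : ℝ, HasDerivAt (iteratedDeriv 2 f) (iteratedDeriv 3 f x) x := by
    intro x
    have h2 : DifferentiableAt ℝ (iteratedDeriv 2 f) x :=
      (hf.differentiable_iteratedDeriv 2 (by exact WithTop.coe_lt_coe.2 (ENat.natCast_lt_top 2))) x
    have := h2.hasDerivAt
    rwa [show deriv (iteratedDeriv 2 f) x = iteratedDeriv 3 f x by rw [← iteratedDeriv_succ]]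
      at this
  have hGd : ∀ x : ℝ, HasDerivAt (iteratedDeriv 2 g) (iteratedDeriv 3 g x) x := by
    intro x
    have h2 : DifferentiableAt ℝ (iteratedDeriv 2 g) x :=
      (hg.differentiable_iteratedDeriv 2 (by exact WithTop.coe_lt_coe.2 (ENat.natCast_lt_top 2))) x
    have := h2.hasDerivAt
    rwa [show deriv (iteratedDeriv 2 g) x = iteratedDeriv 3 g x by rw [← iteratedDeriv_succ]]
      at this
  -- derivative of affine map then composition
  have haff : ∀ (p q r : ℝ), HasDerivAt (fun t : ℝ => p * t + q) p r := by
    intro p q r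
    simpa using ((hasDerivAt_id r).const_mul p).add_const q
  have hcompF : ∀ (p q r : ℝ),
      HasDerivAt (fun t : ℝ => iteratedDeriv 2 f (p * t + q))
        (iteratedDeriv 3 f (p * r + q) * p) r := by
    intro p q r
    exact (hFd (p * r + q)).comp r (haff p q r)
  have hcompG : ∀ (p q r : ℝ),
      HasDerivAt (fun t : ℝ => iteratedDeriv 2 g (p * t + q))
        (iteratedDeriv 3 g (p * r + q) * p) r := by
    intro p q r
    exact (hGd (p * r + q)).comp r (haff p q r)
  set E := (a * d - b * c) ^ 2 with hE
  set P := a ^ 2 + b ^ 2 with hP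
  set Q := c ^ 2 + d ^ 2 with hQ
  -- compute the four derivatives at any point
  have key : ∀ x y : ℝ,
      (E * (iteratedDeriv 3 f (a * x + b * y) * a) * iteratedDeriv 2 g (c * x + d * y) +
        E * iteratedDeriv 2 f (a * x + b * y) * (iteratedDeriv 3 g (c * x + d * y) * c)) *
      ((P * (iteratedDeriv 3 f (a * x + b * y) * b) +
        Q * (iteratedDeriv 3 g (c * x + d * y) * d)) / 2) -
      (E * (iteratedDeriv 3 f (a * x + b * y) * b) * iteratedDeriv 2 g (c * x + d * y) +
        E * iteratedDeriv 2 f (a * x + b * y) * (iteratedDeriv 3 g (c * x + d * y) * d)) *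
      ((P * (iteratedDeriv 3 f (a * x + b * y) * a) +
        Q * (iteratedDeriv 3 g (c * x + d * y) * c)) / 2) = 0 := by
    intro x y
    have e1 : deriv (fun t => K t y) x =
        E * (iteratedDeriv 3 f (a * x + b * y) * a) * iteratedDeriv 2 g (c * x + d * y) +
        E * iteratedDeriv 2 f (a * x + b * y) * (iteratedDeriv 3 g (c * x + d * y) * c) := by
      have : (fun t => K t y) = fun t =>
          E * iteratedDeriv 2 f (a * t + b * y) * iteratedDeriv 2 g (c * t + d * y) := by
        funext t; exact hK t y
      rw [this]
      exact (((hcompF a (b * y) x).const_mul E).mul (hcompG c (d * y) x)).deriv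
    have e2 : deriv (fun t => K x t) y =
        E * (iteratedDeriv 3 f (a * x + b * y) * b) * iteratedDeriv 2 g (c * x + d * y) +
        E * iteratedDeriv 2 f (a * x + b * y) * (iteratedDeriv 3 g (c * x + d * y) * d) := by
      have hfun : (fun t => K x t) = fun t =>
          E * iteratedDeriv 2 f (b * t + a * x) * iteratedDeriv 2 g (d * t + c * x) := by
        funext t; rw [hK x t]; ring_nf
      rw [hfun]
      have := (((hcompF b (a * x) y).const_mul E).mul (hcompG d (c * x) y)).deriv
      refine this.trans ?_; ring_nf
    have e3 : deriv (fun t => H t y) x =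
        (P * (iteratedDeriv 3 f (a * x + b * y) * a) +
         Q * (iteratedDeriv 3 g (c * x + d * y) * c)) / 2 := by
      have : (fun t => H t y) = fun t =>
          (P * iteratedDeriv 2 f (a * t + b * y) + Q * iteratedDeriv 2 g (c * t + d * y)) / 2 := by
        funext t; exact hH t y
      rw [this]
      exact ((((hcompF a (b * y) x).const_mul P).add
        ((hcompG c (d * y) x).const_mul Q)).div_const 2).deriv
    have e4 : deriv (fun t => H x t) y =
        (P * (iteratedDeriv 3 f (a * x + b * y) * b) +
         Q * (iteratedDeriv 3 g (c * x + d * y) * d)) / 2 := by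
      have hfun : (fun t => H x t) = fun t =>
          (P * iteratedDeriv 2 f (b * t + a * x) + Q * iteratedDeriv 2 g (d * t + c * x)) / 2 := by
        funext t; rw [hH x t]; ring_nf
      rw [hfun]
      have := ((((hcompF b (a * x) y).const_mul P).add
        ((hcompG d (c * x) y).const_mul Q)).div_const 2).deriv
      refine this.trans ?_; ring_nf
    have := hW x y
    rw [e1, e2, e3, e4] at this
    exact this
  intro u v
  set D := a * d - b * c with hD
  have hx : a * ((d * u - b * v) / D) + b * ((a * v - c * u) / D) = u := by
    field_simp; ring
  have hy : c * ((d * u - b * v) / D) + d * ((a * v - c * u) / D) = v := by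
    field_simp; ring
  have := key ((d * u - b * v) / D) ((a * v - c * u) / D)
  rw [hx, hy] at this
  have hD3 : D ^ 3 ≠ 0 := pow_ne_zero _ h
  have final : (P * iteratedDeriv 2 f u - Q * iteratedDeriv 2 g v) *
      iteratedDeriv 3 f u * iteratedDeriv 3 g v * D ^ 3 = 0 := by
    linear_combination (-2 : ℝ) * this
  rcases mul_eq_zero.1 final with h1 | h2
  · exact h1
  · exact absurd h2 hD3
end

section
/- Let f, g : ℝ → ℝ be smooth and a,b,c,d,m₀,n₀ ∈ ℝ with ad−bc ≠ 0. If (ad−bc)² f''(u) g''(v) + m₀(a²+b²) f''(u) + m₀(c²+d²) g''(v) = n₀ for all u, v ∈ ℝ, then f'''(u) g'''(v) = 0 for all u, v; consequently f''' ≡ 0 or g''' ≡ 0. -/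
theorem stmt3 (f g : ℝ → ℝ) (hf : ContDiff ℝ (⊤ : ℕ∞) f) (hg : ContDiff ℝ (⊤ : ℕ∞) g)
    (a b c d m₀ n₀ : ℝ) (h : a * d - b * c ≠ 0)
    (heq : ∀ u v, (a * d - b * c) ^ 2 * iteratedDeriv 2 f u * iteratedDeriv 2 g v +
      m₀ * (a ^ 2 + b ^ 2) * iteratedDeriv 2 f u +
      m₀ * (c ^ 2 + d ^ 2) * iteratedDeriv 2 g v = n₀) :
    (∀ u v, iteratedDeriv 3 f u * iteratedDeriv 3 g v = 0) ∧
    ((∀ u, iteratedDeriv 3 f u = 0) ∨ (∀ v, iteratedDeriv 3 g v = 0)) := by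
  have hf' : Differentiable ℝ (iteratedDeriv 2 f) :=
    hf.differentiable_iteratedDeriv 2 (by exact WithTop.coe_lt_coe.2 (ENat.coe_lt_top 2))
  have hg' : Differentiable ℝ (iteratedDeriv 2 g) :=
    hg.differentiable_iteratedDeriv 2 (by exact WithTop.coe_lt_coe.2 (ENat.coe_lt_top 2))
  have hK : (a * d - b * c) ^ 2 ≠ 0 := pow_ne_zero _ h
  -- Step 1: differentiate in u
  have key : ∀ u v, ((a * d - b * c) ^ 2 * iteratedDeriv 2 g v + m₀ * (a ^ 2 + b ^ 2)) *
      iteratedDeriv 3 f u = 0 := by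
    intro u v
    set C := (a * d - b * c) ^ 2 * iteratedDeriv 2 g v + m₀ * (a ^ 2 + b ^ 2) with hC
    have hfun : (fun u => C * iteratedDeriv 2 f u) =
        fun _ => n₀ - m₀ * (c ^ 2 + d ^ 2) * iteratedDeriv 2 g v := by
      funext w
      have := heq w v
      ring_nf
      ring_nf at this
      linarith
    have hd : deriv (fun u => C * iteratedDeriv 2 f u) u = C * iteratedDeriv 3 f u := by
      rw [deriv_const_mul _ (hf' u), ← iteratedDeriv_succ]
    rw [hfun, deriv_const] at hd
    linarith
  have hprod : ∀ u v, iteratedDeriv 3 f u * iteratedDeriv 3 g v = 0 := by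
    intro u v
    have hfun : (fun v => ((a * d - b * c) ^ 2 * iteratedDeriv 3 f u) * iteratedDeriv 2 g v) =
        fun _ => -(m₀ * (a ^ 2 + b ^ 2) * iteratedDeriv 3 f u) := by
      funext w
      have := key u w
      ring_nf
      ring_nf at this
      linarith
    have hd : deriv (fun v => ((a * d - b * c) ^ 2 * iteratedDeriv 3 f u) * iteratedDeriv 2 g v) v
        = ((a * d - b * c) ^ 2 * iteratedDeriv 3 f u) * iteratedDeriv 3 g v := by
      rw [deriv_const_mul _ (hg' v), ← iteratedDeriv_succ]
    rw [hfun, deriv_const] at hd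
    rcases mul_eq_zero.1 hd.symm with h1 | h1
    · rcases mul_eq_zero.1 h1 with h2 | h2
      · exact absurd h2 hK
      · rw [h2, zero_mul]
    · rw [h1, mul_zero]
  refine ⟨hprod, ?_⟩
  by_cases hcase : ∀ u, iteratedDeriv 3 f u = 0
  · exact Or.inl hcase
  · right
    push_neg at hcase
    obtain ⟨u₀, hu₀⟩ := hcase
    intro v
    rcases mul_eq_zero.1 (hprod u₀ v) with h1 | h1
    · exact absurd h1 hu₀
    · exact h1
end

section
/- Let f, g : ℝ → ℝ be smooth, a,b,c,d,m₀,n₀ ∈ ℝ with ad−bc ≠ 0, and suppose (ad−bc)² f'' g'' + m₀(a²+b²) f'' + m₀(c²+d²) g'' = n₀ identically (in independent variables u,v) and g'''(v₀) ≠ 0 for some v₀. Then f'' is constant, and moreover f''(u) = −m₀(c²+d²)/(ad−bc)² for all u; i.e. f(u) = −(m₀(c²+d²)/(2(ad−bc)²)) u² + c₁ u + c₂ for some constants c₁, c₂. -/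
theorem stmt4 (f g : ℝ → ℝ) (hf : ContDiff ℝ (⊤ : ℕ∞) f) (hg : ContDiff ℝ (⊤ : ℕ∞) g)
    (a b c d m₀ n₀ : ℝ) (h : a * d - b * c ≠ 0)
    (heq : ∀ u v, (a * d - b * c) ^ 2 * iteratedDeriv 2 f u * iteratedDeriv 2 g v +
      m₀ * (a ^ 2 + b ^ 2) * iteratedDeriv 2 f u +
      m₀ * (c ^ 2 + d ^ 2) * iteratedDeriv 2 g v = n₀)
    (v₀ : ℝ) (hv₀ : iteratedDeriv 3 g v₀ ≠ 0) :
    (∀ u, iteratedDeriv 2 f u = -m₀ * (c ^ 2 + d ^ 2) / (a * d - b * c) ^ 2) ∧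
    ∃ c₁ c₂ : ℝ, ∀ u,
      f u = -(m₀ * (c ^ 2 + d ^ 2) / (2 * (a * d - b * c) ^ 2)) * u ^ 2 + c₁ * u + c₂ := by
  have hD : (a * d - b * c) ^ 2 ≠ 0 := pow_ne_zero _ h
  -- Step 1: f'' is the claimed constant
  have key : ∀ u, iteratedDeriv 2 f u = -m₀ * (c ^ 2 + d ^ 2) / (a * d - b * c) ^ 2 := by
    intro u
    set K : ℝ := (a * d - b * c) ^ 2 * iteratedDeriv 2 f u + m₀ * (c ^ 2 + d ^ 2) with hK
    have hmul : ∀ v, K * iteratedDeriv 2 g v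
        = n₀ - m₀ * (a ^ 2 + b ^ 2) * iteratedDeriv 2 f u := by
      intro v
      have := heq u v
      ring_nf
      ring_nf at this
      linarith
    have hK0 : K = 0 := by
      by_contra hK0
      have hconst : ∀ v, iteratedDeriv 2 g v
          = (n₀ - m₀ * (a ^ 2 + b ^ 2) * iteratedDeriv 2 f u) / K := by
        intro v
        field_simp
        linarith [hmul v]
      have : iteratedDeriv 3 g v₀ = 0 := by
        have h3 : iteratedDeriv 3 g = deriv (iteratedDeriv 2 g) := by
          rw [iteratedDeriv_succ]
        rw [h3, funext hconst, deriv_const]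
      exact hv₀ this
    have : (a * d - b * c) ^ 2 * iteratedDeriv 2 f u = -(m₀ * (c ^ 2 + d ^ 2)) := by
      linarith [hK0, hK]
    rw [eq_div_iff hD]
    linarith
  refine ⟨key, ?_⟩
  -- Step 2: integrate twice
  set k : ℝ := -m₀ * (c ^ 2 + d ^ 2) / (a * d - b * c) ^ 2 with hk
  have hfd : Differentiable ℝ f := hf.differentiable (by simp)
  have hfd' : Differentiable ℝ (deriv f) := by
    have h1 : ContDiff ℝ ((⊤ : ℕ∞) : WithTop ℕ∞) f := hf.of_le (by simp)
    exact ((contDiff_infty_iff_deriv.mp h1).2).differentiable (by simp)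
  have hdd : ∀ u, deriv (deriv f) u = k := by
    intro u
    have := key u
    rwa [iteratedDeriv_succ, iteratedDeriv_one] at this
  -- deriv f u = k * u + deriv f 0
  have h1 : ∀ u, deriv f u = k * u + deriv f 0 := by
    intro u
    have hder : ∀ x : ℝ, HasDerivAt (fun x => deriv f x - k * x) 0 x := by
      intro x
      have hA : HasDerivAt (deriv f) k x := by
        have := (hfd' x).hasDerivAt
        rwa [hdd x] at this
      have hB : HasDerivAt (fun x : ℝ => k * x) k x := by
        simpa using (hasDerivAt_id x).const_mul k
      exact (hA.sub hB).congr_deriv (by simp)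
    have hc : ∀ x y : ℝ, (fun x => deriv f x - k * x) x = (fun x => deriv f x - k * x) y := by
      apply is_const_of_deriv_eq_zero
      · exact fun x => (hder x).differentiableAt
      · exact fun x => (hder x).deriv
    have := hc u 0
    simp at this
    linarith
  have h2 : ∀ u, f u = -(m₀ * (c ^ 2 + d ^ 2) / (2 * (a * d - b * c) ^ 2)) * u ^ 2
      + deriv f 0 * u + f 0 := by
    intro u
    have hP : -(m₀ * (c ^ 2 + d ^ 2) / (2 * (a * d - b * c) ^ 2)) = k / 2 := by
      rw [hk, neg_mul, neg_div, neg_div, div_div, mul_comm ((a * d - b * c) ^ 2) 2]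
    rw [hP]
    have hder : ∀ x : ℝ,
        HasDerivAt (fun x => f x - (k / 2 * x ^ 2 + deriv f 0 * x)) 0 x := by
      intro x
      have hA : HasDerivAt f (k * x + deriv f 0) x := by
        have := (hfd x).hasDerivAt
        rwa [h1 x] at this
      have hB : HasDerivAt (fun x : ℝ => k / 2 * x ^ 2 + deriv f 0 * x)
          (k / 2 * (2 * x ^ 1) + deriv f 0) x := by
        have hp : HasDerivAt (fun x : ℝ => x ^ 2) (2 * x ^ 1) x := by
          simpa using hasDerivAt_pow 2 x
        have := (hp.const_mul (k / 2)).add ((hasDerivAt_id x).const_mul (deriv f 0))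
        exact this.congr_deriv (by ring)
      have := hA.sub hB
      exact this.congr_deriv (by ring)
    have hc : ∀ x y : ℝ,
        (fun x => f x - (k / 2 * x ^ 2 + deriv f 0 * x)) x
        = (fun x => f x - (k / 2 * x ^ 2 + deriv f 0 * x)) y := by
      apply is_const_of_deriv_eq_zero
      · exact fun x => (hder x).differentiableAt
      · exact fun x => (hder x).deriv
    have := hc u 0
    simp at this
    linarith
  exact ⟨deriv f 0, f 0, h2⟩
end

section
/- Let f, g : ℝ → ℝ be smooth, a,b,c,d ∈ ℝ with a²+b² > 0 and c²+d² > 0, and λ > 0. If (a²+b²) f''(u) + (c²+d²) g''(v) = λ (f(u) + g(v)) for all u,v ∈ ℝ, then there exist constants μ, c₁, c₂, c₃, c₄ such that f(u) = c₁ exp(√(λ/(a²+b²)) u) + c₂ exp(−√(λ/(a²+b²)) u) + μ/λ and g(v) = c₃ exp(√(λ/(c²+d²)) v) + c₄ exp(−√(λ/(c²+d²)) v) − μ/λ. -/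
/-- First-order linear ODE: if `deriv h = c • h` then `h x = h 0 * exp (c x)`. -/
lemma ode1 (h : ℝ → ℝ) (hd : Differentiable ℝ h) (c : ℝ)
    (hh : ∀ x, deriv h x = c * h x) : ∀ x, h x = h 0 * Real.exp (c * x) := by
  have key : ∀ x, h x * Real.exp (-c * x) = h 0 := by
    intro x
    have hconst : ∀ y z : ℝ, h y * Real.exp (-c * y) = h z * Real.exp (-c * z) := by
      have hdiff : Differentiable ℝ (fun x => h x * Real.exp (-c * x)) := by
        exact hd.mul (((differentiable_id.const_mul (-c))).exp)
      apply is_const_of_deriv_eq_zero hdiff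
      intro x
      have h1 : HasDerivAt (fun x => Real.exp (-c * x)) (-c * Real.exp (-c * x)) x := by
        have := ((hasDerivAt_id x).const_mul (-c)).exp
        simpa [mul_comm] using this
      have h2 : HasDerivAt h (c * h x) x := by
        have := (hd x).hasDerivAt
        rwa [hh x] at this
      have h3 := h2.mul h1
      have : deriv (fun x => h x * Real.exp (-c * x)) x
          = c * h x * Real.exp (-c * x) + h x * (-c * Real.exp (-c * x)) := h3.deriv
      rw [this]; ring
    simpa using hconst x 0
  intro x
  have hx := key x
  have hmul : Real.exp (-c * x) * Real.exp (c * x) = 1 := by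
    rw [← Real.exp_add]; ring_nf; exact Real.exp_zero
  calc h x = h x * (Real.exp (-c * x) * Real.exp (c * x)) := by rw [hmul, mul_one]
    _ = (h x * Real.exp (-c * x)) * Real.exp (c * x) := by ring
    _ = h 0 * Real.exp (c * x) := by rw [hx]

/-- Second-order ODE `F'' = k² F` has only solutions `c₁ e^{kx} + c₂ e^{-kx}`. -/
lemma ode2 (F : ℝ → ℝ) (hd : Differentiable ℝ F) (hd2 : Differentiable ℝ (deriv F))
    (k : ℝ) (hk : 0 < k) (hF : ∀ x, deriv (deriv F) x = k ^ 2 * F x) :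
    ∃ c₁ c₂ : ℝ, ∀ x, F x = c₁ * Real.exp (k * x) + c₂ * Real.exp (-k * x) := by
  set c₂ : ℝ := (F 0 - deriv F 0 / k) / 2 with hc₂
  set c₁ : ℝ := F 0 - c₂ with hc₁
  refine ⟨c₁, c₂, ?_⟩
  -- H x := deriv F x - k * F x + 2*k*c₂ * exp (-k x) satisfies H' = -k H, H 0 = 0
  set H : ℝ → ℝ := fun x => deriv F x - k * F x + 2 * k * c₂ * Real.exp (-k * x) with hH
  have hHd : Differentiable ℝ H := by
    exact (hd2.sub (hd.const_mul k)).add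
      (((differentiable_id.const_mul (-k)).exp).const_mul (2 * k * c₂))
  have hHderiv : ∀ x, deriv H x = -k * H x := by
    intro x
    have h1 : HasDerivAt (fun x => Real.exp (-k * x)) (-k * Real.exp (-k * x)) x := by
      simpa [mul_comm] using ((hasDerivAt_id x).const_mul (-k)).exp
    have h2 : HasDerivAt (deriv F) (k ^ 2 * F x) x := by
      have := (hd2 x).hasDerivAt
      rwa [hF x] at this
    have h3 : HasDerivAt F (deriv F x) x := (hd x).hasDerivAt
    have h4 : HasDerivAt H (k ^ 2 * F x - k * deriv F x
        + 2 * k * c₂ * (-k * Real.exp (-k * x))) x := by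
      exact (h2.sub (h3.const_mul k)).add (h1.const_mul (2 * k * c₂))
    rw [h4.deriv]; simp only [hH]; ring
  have hH0 : H 0 = 0 := by
    have hk' : k ≠ 0 := ne_of_gt hk
    simp only [hH, hc₂]
    field_simp
    simp
  have hHzero : ∀ x, H x = 0 := by
    intro x
    have := ode1 H hHd (-k) hHderiv x
    rw [this, hH0, zero_mul]
  -- P x := F x - c₂ * exp (-k x) satisfies P' = k P
  set P : ℝ → ℝ := fun x => F x - c₂ * Real.exp (-k * x) with hP
  have hPd : Differentiable ℝ P :=
    hd.sub (((differentiable_id.const_mul (-k)).exp).const_mul c₂)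
  have hPderiv : ∀ x, deriv P x = k * P x := by
    intro x
    have h1 : HasDerivAt (fun x => Real.exp (-k * x)) (-k * Real.exp (-k * x)) x := by
      simpa [mul_comm] using ((hasDerivAt_id x).const_mul (-k)).exp
    have h3 : HasDerivAt F (deriv F x) x := (hd x).hasDerivAt
    have h4 : HasDerivAt P (deriv F x - c₂ * (-k * Real.exp (-k * x))) x :=
      h3.sub (h1.const_mul c₂)
    rw [h4.deriv]
    have hHx := hHzero x
    simp only [hH] at hHx
    have hdF : deriv F x = k * F x - 2 * k * c₂ * Real.exp (-k * x) := by linarith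
    simp only [hP]; rw [hdF]; ring
  intro x
  have hPx := ode1 P hPd k hPderiv x
  have hP0 : P 0 = c₁ := by simp [hP, hc₁]
  rw [hP0] at hPx
  have hPx' : F x - c₂ * Real.exp (-k * x) = c₁ * Real.exp (k * x) := hPx
  linarith

theorem stmt8 (f g : ℝ → ℝ) (hf : ContDiff ℝ (⊤ : ℕ∞) f) (hg : ContDiff ℝ (⊤ : ℕ∞) g)
    (a b c d : ℝ) (hab : 0 < a ^ 2 + b ^ 2) (hcd : 0 < c ^ 2 + d ^ 2)
    (lam : ℝ) (hlam : 0 < lam)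
    (heq : ∀ u v, (a ^ 2 + b ^ 2) * iteratedDeriv 2 f u +
      (c ^ 2 + d ^ 2) * iteratedDeriv 2 g v = lam * (f u + g v)) :
    ∃ μ c₁ c₂ c₃ c₄ : ℝ,
      (∀ u, f u = c₁ * Real.exp (Real.sqrt (lam / (a ^ 2 + b ^ 2)) * u) +
        c₂ * Real.exp (-Real.sqrt (lam / (a ^ 2 + b ^ 2)) * u) + μ / lam) ∧
      (∀ v, g v = c₃ * Real.exp (Real.sqrt (lam / (c ^ 2 + d ^ 2)) * v) +
        c₄ * Real.exp (-Real.sqrt (lam / (c ^ 2 + d ^ 2)) * v) - μ / lam) := by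
  have hlam' : lam ≠ 0 := ne_of_gt hlam
  have hab' : (a ^ 2 + b ^ 2) ≠ 0 := ne_of_gt hab
  have hcd' : (c ^ 2 + d ^ 2) ≠ 0 := ne_of_gt hcd
  -- differentiability facts
  have hfdiff : Differentiable ℝ f ∧ Differentiable ℝ (deriv f) := by
    have hf' : ContDiff ℝ (⊤:ℕ∞) f := hf.of_le (by simp)
    have h1 := (contDiff_infty_iff_deriv.mp hf').2
    exact ⟨hf'.differentiable (by simp), h1.differentiable (by simp)⟩
  have hgdiff : Differentiable ℝ g ∧ Differentiable ℝ (deriv g) := by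
    have hg' : ContDiff ℝ (⊤:ℕ∞) g := hg.of_le (by simp)
    have h1 := (contDiff_infty_iff_deriv.mp hg').2
    exact ⟨hg'.differentiable (by simp), h1.differentiable (by simp)⟩
  have hit : ∀ (h : ℝ → ℝ) (x : ℝ), iteratedDeriv 2 h x = deriv (deriv h) x := by
    intro h x
    rw [show (2:ℕ) = 1 + 1 by rfl, iteratedDeriv_succ, iteratedDeriv_one]
  set μ : ℝ := lam * f 0 - (a ^ 2 + b ^ 2) * iteratedDeriv 2 f 0 with hμ
  -- separated ODEs
  have hfode : ∀ u, deriv (deriv f) u = lam / (a ^ 2 + b ^ 2) * (f u - μ / lam) := by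
    intro u
    have h1 := heq u 0
    have h2 := heq 0 0
    rw [← hit f u]
    have : (a ^ 2 + b ^ 2) * iteratedDeriv 2 f u = lam * f u - μ := by
      simp only [hμ]; linarith
    field_simp
    linear_combination this
  have hgode : ∀ v, deriv (deriv g) v = lam / (c ^ 2 + d ^ 2) * (g v + μ / lam) := by
    intro v
    have h1 := heq 0 v
    rw [← hit g v]
    have : (c ^ 2 + d ^ 2) * iteratedDeriv 2 g v = lam * g v + μ := by
      simp only [hμ]; linarith
    field_simp
    linear_combination this
  -- constants
  set k₁ : ℝ := Real.sqrt (lam / (a ^ 2 + b ^ 2)) with hk₁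
  set k₂ : ℝ := Real.sqrt (lam / (c ^ 2 + d ^ 2)) with hk₂
  have hk₁pos : 0 < k₁ := Real.sqrt_pos.mpr (div_pos hlam hab)
  have hk₂pos : 0 < k₂ := Real.sqrt_pos.mpr (div_pos hlam hcd)
  have hk₁sq : k₁ ^ 2 = lam / (a ^ 2 + b ^ 2) :=
    Real.sq_sqrt (le_of_lt (div_pos hlam hab))
  have hk₂sq : k₂ ^ 2 = lam / (c ^ 2 + d ^ 2) :=
    Real.sq_sqrt (le_of_lt (div_pos hlam hcd))
  -- F := f - μ/lam
  set F : ℝ → ℝ := fun u => f u - μ / lam with hF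
  have hFd : Differentiable ℝ F := hfdiff.1.sub_const _
  have hFderiv : deriv F = deriv f := by
    funext x
    simp only [hF]
    rw [deriv_sub_const]
  have hFd2 : Differentiable ℝ (deriv F) := by rw [hFderiv]; exact hfdiff.2
  have hFode : ∀ x, deriv (deriv F) x = k₁ ^ 2 * F x := by
    intro x
    rw [hFderiv, hk₁sq]
    simpa only [hF] using hfode x
  obtain ⟨c₁, c₂, hc⟩ := ode2 F hFd hFd2 k₁ hk₁pos hFode
  -- G := g + μ/lam
  set G : ℝ → ℝ := fun v => g v + μ / lam with hG
  have hGd : Differentiable ℝ G := hgdiff.1.add_const _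
  have hGderiv : deriv G = deriv g := by
    funext x
    simp only [hG]
    rw [deriv_add_const]
  have hGd2 : Differentiable ℝ (deriv G) := by rw [hGderiv]; exact hgdiff.2
  have hGode : ∀ x, deriv (deriv G) x = k₂ ^ 2 * G x := by
    intro x
    rw [hGderiv, hk₂sq]
    simpa only [hG] using hgode x
  obtain ⟨c₃, c₄, hc'⟩ := ode2 G hGd hGd2 k₂ hk₂pos hGode
  refine ⟨μ, c₁, c₂, c₃, c₄, ?_, ?_⟩
  · intro u
    have := hc u
    simp only [hF] at this
    linarith
  · intro v
    have := hc' v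
    simp only [hG] at this
    linarith
end

section
/- Let f, g : ℝ → ℝ be smooth, a,b,c,d ∈ ℝ with a²+b² > 0 and c²+d² > 0, and λ < 0. If (a²+b²) f''(u) + (c²+d²) g''(v) = λ (f(u) + g(v)) for all u,v ∈ ℝ, then there exist constants μ, c₁, c₂, c₃, c₄ such that f(u) = c₁ cos(√(−λ/(a²+b²)) u) + c₂ sin(√(−λ/(a²+b²)) u) + μ/λ and g(v) = c₃ cos(√(−λ/(c²+d²)) v) + c₄ sin(√(−λ/(c²+d²)) v) − μ/λ. -/
lemma osc (h : ℝ → ℝ) (hh : ContDiff ℝ (⊤ : ℕ∞) h) (k : ℝ) (hk : 0 < k)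
    (ode : ∀ u, deriv (deriv h) u = -k ^ 2 * h u) :
    ∀ u, h u = h 0 * Real.cos (k * u) + (deriv h 0 / k) * Real.sin (k * u) := by
  set p : ℝ → ℝ := fun u => h u - (h 0 * Real.cos (k * u) + deriv h 0 / k * Real.sin (k * u))
    with hp
  set dp : ℝ → ℝ := fun u => deriv h u -
    (-(h 0) * k * Real.sin (k * u) + deriv h 0 * Real.cos (k * u)) with hdpdef
  have hh2 : ContDiff ℝ ((⊤ : ℕ∞) : WithTop ℕ∞) h := hh.of_le (by simp)
  have hdh : Differentiable ℝ (deriv h) := ((contDiff_infty_iff_deriv.mp hh2).2).differentiable (by simp)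
  have hku : ∀ u : ℝ, HasDerivAt (fun u : ℝ => k * u) k u := by
    intro u
    simpa using (hasDerivAt_id u).const_mul k
  have hcos : ∀ u : ℝ, HasDerivAt (fun u => Real.cos (k * u)) (-Real.sin (k * u) * k) u :=
    fun u => (Real.hasDerivAt_cos (k * u)).comp u (hku u)
  have hsin : ∀ u : ℝ, HasDerivAt (fun u => Real.sin (k * u)) (Real.cos (k * u) * k) u :=
    fun u => (Real.hasDerivAt_sin (k * u)).comp u (hku u)
  have hdp : ∀ u, HasDerivAt p (dp u) u := by
    intro u
    have := ((hh.differentiable (by simp) u).hasDerivAt).sub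
      (((hcos u).const_mul (h 0)).add ((hsin u).const_mul (deriv h 0 / k)))
    convert this using 1
    · rfl
    · rfl
    · rfl
    field_simp [hdpdef]
    ring
  have hdp2 : ∀ u, HasDerivAt dp (-k ^ 2 * p u) u := by
    intro u
    have := ((hdh u).hasDerivAt).sub
      (((hsin u).const_mul (-(h 0) * k)).add ((hcos u).const_mul (deriv h 0)))
    convert this using 1
    · rfl
    · rfl
    · rfl
    rw [ode u, hp]
    field_simp
    ring
  set E : ℝ → ℝ := fun u => dp u ^ 2 + k ^ 2 * p u ^ 2 with hE
  have hE' : ∀ u, HasDerivAt E 0 u := by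
    intro u
    have := ((hdp2 u).pow 2).add (((hdp u).pow 2).const_mul (k ^ 2))
    convert this using 1
    · rfl
    · rfl
    · rfl
    push_cast
    ring
  have hEconst : ∀ u, E u = E 0 := by
    intro u
    exact is_const_of_deriv_eq_zero (fun x => (hE' x).differentiableAt)
      (fun x => (hE' x).deriv) u 0
  have hE0 : E 0 = 0 := by
    simp [hE, hdpdef, hp, hk.ne']
  intro u
  have h1 : dp u ^ 2 + k ^ 2 * p u ^ 2 = 0 := by
    have := hEconst u
    rw [hE0] at this
    exact this
  have hpu : p u = 0 := by
    have h2 : (0:ℝ) ≤ k ^ 2 * p u ^ 2 := by positivity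
    have h3 : (0:ℝ) ≤ dp u ^ 2 := sq_nonneg _
    have h4 : k ^ 2 * p u ^ 2 = 0 := by linarith
    have h5 : p u ^ 2 = 0 := by
      rcases mul_eq_zero.mp h4 with h | h
      · exact absurd h (by positivity)
      · exact h
    exact pow_eq_zero_iff (by norm_num) |>.mp h5
  have := hpu
  simp only [hp] at this
  linarith

theorem stmt9 (f g : ℝ → ℝ) (hf : ContDiff ℝ (⊤ : ℕ∞) f) (hg : ContDiff ℝ (⊤ : ℕ∞) g)
    (a b c d : ℝ) (hab : 0 < a ^ 2 + b ^ 2) (hcd : 0 < c ^ 2 + d ^ 2)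
    (lam : ℝ) (hlam : lam < 0)
    (heq : ∀ u v, (a ^ 2 + b ^ 2) * iteratedDeriv 2 f u +
      (c ^ 2 + d ^ 2) * iteratedDeriv 2 g v = lam * (f u + g v)) :
    ∃ μ c₁ c₂ c₃ c₄ : ℝ,
      (∀ u, f u = c₁ * Real.cos (Real.sqrt (-lam / (a ^ 2 + b ^ 2)) * u) +
        c₂ * Real.sin (Real.sqrt (-lam / (a ^ 2 + b ^ 2)) * u) + μ / lam) ∧
      (∀ v, g v = c₃ * Real.cos (Real.sqrt (-lam / (c ^ 2 + d ^ 2)) * v) +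
        c₄ * Real.sin (Real.sqrt (-lam / (c ^ 2 + d ^ 2)) * v) - μ / lam) := by
  have hlam0 : lam ≠ 0 := hlam.ne
  have hA : (a ^ 2 + b ^ 2) ≠ 0 := hab.ne'
  have hB : (c ^ 2 + d ^ 2) ≠ 0 := hcd.ne'
  have it2 : ∀ F : ℝ → ℝ, iteratedDeriv 2 F = deriv (deriv F) := by
    intro F
    rw [show (2 : ℕ) = 1 + 1 from rfl, iteratedDeriv_succ, iteratedDeriv_one]
  set μ : ℝ := (c ^ 2 + d ^ 2) * iteratedDeriv 2 g 0 - lam * g 0 with hμ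
  have hfode : ∀ u, (a ^ 2 + b ^ 2) * iteratedDeriv 2 f u = lam * f u - μ := by
    intro u
    have := heq u 0
    rw [hμ]; linarith
  have hgode : ∀ v, (c ^ 2 + d ^ 2) * iteratedDeriv 2 g v = lam * g v + μ := by
    intro v
    have h1 := heq 0 v
    have h2 := hfode 0
    linarith
  set k₁ : ℝ := Real.sqrt (-lam / (a ^ 2 + b ^ 2)) with hk₁def
  set k₂ : ℝ := Real.sqrt (-lam / (c ^ 2 + d ^ 2)) with hk₂def
  have hk₁ : 0 < k₁ := Real.sqrt_pos.mpr (div_pos (neg_pos.mpr hlam) hab)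
  have hk₂ : 0 < k₂ := Real.sqrt_pos.mpr (div_pos (neg_pos.mpr hlam) hcd)
  have hk₁sq : k₁ ^ 2 = -lam / (a ^ 2 + b ^ 2) :=
    Real.sq_sqrt (le_of_lt (div_pos (neg_pos.mpr hlam) hab))
  have hk₂sq : k₂ ^ 2 = -lam / (c ^ 2 + d ^ 2) :=
    Real.sq_sqrt (le_of_lt (div_pos (neg_pos.mpr hlam) hcd))
  set h₁ : ℝ → ℝ := fun u => f u - μ / lam with hh₁
  set h₂ : ℝ → ℝ := fun v => g v + μ / lam with hh₂
  have hd₁ : deriv h₁ = deriv f := by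
    funext x
    exact deriv_sub_const _
  have hd₂ : deriv h₂ = deriv g := by
    funext x
    exact deriv_add_const _
  have ode₁ : ∀ u, deriv (deriv h₁) u = -k₁ ^ 2 * h₁ u := by
    intro u
    rw [hd₁, ← it2 f, hk₁sq, hh₁]
    have := hfode u
    field_simp
    linear_combination this
  have ode₂ : ∀ v, deriv (deriv h₂) v = -k₂ ^ 2 * h₂ v := by
    intro v
    rw [hd₂, ← it2 g, hk₂sq, hh₂]
    have := hgode v
    field_simp
    linear_combination this
  have sol₁ := osc h₁ (hf.sub contDiff_const) k₁ hk₁ ode₁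
  have sol₂ := osc h₂ (hg.add contDiff_const) k₂ hk₂ ode₂
  refine ⟨μ, f 0 - μ / lam, deriv f 0 / k₁, g 0 + μ / lam, deriv g 0 / k₂, ?_, ?_⟩
  · intro u
    have := sol₁ u
    rw [hd₁] at this
    simp only [hh₁] at this
    linarith
  · intro v
    have := sol₂ v
    rw [hd₂] at this
    simp only [hh₂] at this
    linarith
end

section
/- Let λ, λ₃ ∈ ℝ with λ ≠ 0 and λ₃ ≠ 0, and suppose f(u) = A + c₂ u^{λ₃/λ} on an interval of positive reals with c₂ ≠ 0 and λ₃/λ ∉ {0,1} (so f'' is nowhere zero). Then the equation f'''(u)/(f''(u))² = 2λu cannot hold for all u in a nontrivial interval. -/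
/-!
On `I` the second and third derivatives are `C u^(k-2)` and `C (k-2) u^(k-3)` with
`C = c₂ k (k-1) ≠ 0`, so the equation `f''' / f''² = 2λu` reduces to `u^k = (k-2) / (2λC)`.
Thus `u ↦ u^k`, which is injective on `(0, ∞)` for `k ≠ 0`, would be constant on the open
set `I`, which has at least two points.
-/

open Set

theorem iteratedDeriv_const_add_const_mul_rpow (a c p x : ℝ) {n : ℕ} (hn : 0 < n) :
    iteratedDeriv n (fun y => a + c * y ^ p) x =
      c * (descPochhammer ℝ n).eval p * x ^ (p - n) := by
  rw [iteratedDeriv_const_add hn, iteratedDeriv_const_mul_field, iteratedDeriv_eq_iterate,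
    Real.iter_deriv_rpow_const, mul_assoc]

theorem rpow_eq_of_div_rpow_sq_eq {C k lam u : ℝ} (hu : 0 < u) (hC : C ≠ 0) (hlam : lam ≠ 0)
    (h : C * (k - 2) * u ^ (k - 3) / (C * u ^ (k - 2)) ^ 2 = 2 * lam * u) :
    u ^ k = (k - 2) / (2 * lam * C) := by
  have hk : 0 < u ^ k := Real.rpow_pos_of_pos hu k
  rw [Real.rpow_sub hu, Real.rpow_sub hu] at h
  norm_num at h
  field_simp at h ⊢
  linarith

theorem IsOpen.nontrivial_of_nonempty {s : Set ℝ} (hs : IsOpen s) (hne : s.Nonempty) :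
    s.Nontrivial :=
  let ⟨x, hx⟩ := hne
  (infinite_of_mem_nhds x (hs.mem_nhds hx)).nontrivial

theorem stmt13_general (f : ℝ → ℝ) (lam lam₃ A c₂ : ℝ) (hlam : lam ≠ 0)
    (hc₂ : c₂ ≠ 0) (hk0 : lam₃ / lam ≠ 0) (hk1 : lam₃ / lam ≠ 1)
    (I : Set ℝ) (hIopen : IsOpen I) (hIne : I.Nonempty) (hI : I ⊆ Set.Ioi (0 : ℝ))
    (hf : ∀ u ∈ I, f u = A + c₂ * u ^ (lam₃ / lam)) :
    ¬ (∀ u ∈ I, iteratedDeriv 3 f u / (iteratedDeriv 2 f u) ^ 2 = 2 * lam * u) := by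
  intro hE
  set k := lam₃ / lam
  have hC : c₂ * (k * (k - 1)) ≠ 0 := mul_ne_zero hc₂ (mul_ne_zero hk0 (sub_ne_zero.mpr hk1))
  have hderiv (n : ℕ) (hn : 0 < n) (u : ℝ) (hu : u ∈ I) :
      iteratedDeriv n f u = c₂ * (descPochhammer ℝ n).eval k * u ^ (k - n) := by
    rw [EqOn.iteratedDeriv_of_isOpen hf hIopen n hu,
      iteratedDeriv_const_add_const_mul_rpow _ _ _ _ hn]
  have hconst (u : ℝ) (hu : u ∈ I) : u ^ k = (k - 2) / (2 * lam * (c₂ * (k * (k - 1)))) := by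
    refine rpow_eq_of_div_rpow_sq_eq (hI hu) hC hlam ?_
    have h := hE u hu
    rw [hderiv 3 (by norm_num) u hu, hderiv 2 (by norm_num) u hu] at h
    simp only [descPochhammer_succ_eval, descPochhammer_zero, Polynomial.eval_one] at h
    convert h using 3 <;> push_cast <;> ring
  refine (hIopen.nontrivial_of_nonempty hIne).not_subsingleton fun u hu v hv => ?_
  exact Real.rpow_left_injOn hk0 (Ioi_subset_Ici_self (hI hu)) (Ioi_subset_Ici_self (hI hv))
    ((hconst u hu).trans (hconst v hv).symm)

theorem stmt13 (f : ℝ → ℝ) (lam lam₃ A c₂ : ℝ) (hlam : lam ≠ 0) (hlam₃ : lam₃ ≠ 0)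
    (hc₂ : c₂ ≠ 0) (hk0 : lam₃ / lam ≠ 0) (hk1 : lam₃ / lam ≠ 1)
    (I : Set ℝ) (hIopen : IsOpen I) (hIne : I.Nonempty) (hI : I ⊆ Set.Ioi (0 : ℝ))
    (hf : ∀ u ∈ I, f u = A + c₂ * u ^ (lam₃ / lam)) :
    ¬ (∀ u ∈ I, iteratedDeriv 3 f u / (iteratedDeriv 2 f u) ^ 2 = 2 * lam * u) :=
  stmt13_general f lam lam₃ A c₂ hlam hc₂ hk0 hk1 I hIopen hIne hI hf
end

section
/- The function z(x,y) = ln(2x+y) + ln(x−y), defined where 2x+y > 0 and x−y > 0, satisfies: with u = 2x+y, v = x−y, f = g = ln, the equations d·f'''(u)/(f''(u))² − b·g'''(v)/(g''(v))² = 2(ad−bc)·1·x and −c·f'''(u)/(f''(u))² + a·g'''(v)/(g''(v))² = 2(ad−bc)·1·y hold with (a,b,c,d) = (2,1,1,−1), λ₁ = λ₂ = 1, i.e. Δ^{II} x = x and Δ^{II} y = y, and Δ^{II} z = 0. -/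
/-!
Writing `u = ax + by`, `v = cx + dy`, the chain rule turns `Δ^{II}` on a translation surface into an
expression in `f', f'', f'''` at `u` and `g', g'', g'''` at `v`: the coordinate functions give
`Δ^{II} x = (d f'''/f''² - b g'''/g''²) / (2(ad - bc))` (and symmetrically for `y`), while for
`z = f(u) + g(v)` the second-order part collapses to `-2`, leaving
`Δ^{II} z = (f' f'''/f''² + g' g'''/g''²) / 2 - 2`.
For `f = g = ln` one has `f'''/f''² = 2u` and `f' f'''/f''² = 2`, which gives all five identities.
-/

/-- The second-fundamental-form Laplace operator of an affine translation surface
`z = f(ax+by) + g(cx+dy)` in the isotropic 3-space, applied to a function `φ`. -/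
noncomputable def lapII (f g : ℝ → ℝ) (a b c d : ℝ) (φ : ℝ → ℝ → ℝ) (x y : ℝ) : ℝ :=
  ((iteratedDeriv 2 f (a * x + b * y) * iteratedDeriv 2 g (c * x + d * y)) ^ 2)⁻¹ /
      (2 * (a * d - b * c)) *
    ((-b * deriv (fun t => φ t y) x + a * deriv (fun t => φ x t) y) *
        (iteratedDeriv 2 f (a * x + b * y)) ^ 2 * iteratedDeriv 3 g (c * x + d * y) +
      (d * deriv (fun t => φ t y) x - c * deriv (fun t => φ x t) y) *
        iteratedDeriv 3 f (a * x + b * y) * (iteratedDeriv 2 g (c * x + d * y)) ^ 2) +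
  (iteratedDeriv 2 f (a * x + b * y) * iteratedDeriv 2 g (c * x + d * y))⁻¹ /
      (a * d - b * c) ^ 2 *
    ((2 * a * b * deriv (fun t => deriv (fun s => φ s t) x) y -
        b ^ 2 * deriv (fun t => deriv (fun s => φ s y) t) x -
        a ^ 2 * deriv (fun t => deriv (fun s => φ x s) t) y) *
        iteratedDeriv 2 f (a * x + b * y) +
      (2 * c * d * deriv (fun t => deriv (fun s => φ s t) x) y -
        d ^ 2 * deriv (fun t => deriv (fun s => φ s y) t) x -
        c ^ 2 * deriv (fun t => deriv (fun s => φ x s) t) y) *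
        iteratedDeriv 2 g (c * x + d * y))

open Filter Topology Real

def translationSurface (f g : ℝ → ℝ) (a b c d : ℝ) (s t : ℝ) : ℝ :=
  f (a * s + b * t) + g (c * s + d * t)

section TranslationSurface

variable {f g : ℝ → ℝ} {a b c d x y f' g' : ℝ}

lemma HasDerivAt.comp_linear_fst (hf : HasDerivAt f f' (a * x + b * y)) :
    HasDerivAt (fun s => f (a * s + b * y)) (a * f') x := by
  have hl : HasDerivAt (fun s => a * s + b * y) a x := by
    simpa using ((hasDerivAt_id x).const_mul a).add_const (b * y)
  simpa [Function.comp_def, mul_comm] using hf.comp x hl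

lemma HasDerivAt.comp_linear_snd (hf : HasDerivAt f f' (a * x + b * y)) :
    HasDerivAt (fun t => f (a * x + b * t)) (b * f') y := by
  have hl : HasDerivAt (fun t => a * x + b * t) b y := by
    simpa using ((hasDerivAt_id y).const_mul b).const_add (a * x)
  simpa [Function.comp_def, mul_comm] using hf.comp y hl

lemma eventually_comp_linear_fst {p : ℝ → Prop} (h : ∀ᶠ w in 𝓝 (a * x + b * y), p w) :
    ∀ᶠ s in 𝓝 x, p (a * s + b * y) :=
  ((by fun_prop : Continuous fun s => a * s + b * y).tendsto x).eventually h

lemma eventually_comp_linear_snd {p : ℝ → Prop} (h : ∀ᶠ w in 𝓝 (a * x + b * y), p w) :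
    ∀ᶠ t in 𝓝 y, p (a * x + b * t) :=
  ((by fun_prop : Continuous fun t => a * x + b * t).tendsto y).eventually h

lemma ContDiffAt.eventually_hasDerivAt {u : ℝ} (hf : ContDiffAt ℝ 2 f u) :
    ∀ᶠ w in 𝓝 u, HasDerivAt f (deriv f w) w :=
  (hf.eventually (by decide)).mono fun _ hw => (hw.differentiableAt two_ne_zero).hasDerivAt

lemma ContDiffAt.hasDerivAt_deriv {u : ℝ} (hf : ContDiffAt ℝ 2 f u) :
    HasDerivAt (deriv f) (iteratedDeriv 2 f u) u := by
  rw [iteratedDeriv_succ, iteratedDeriv_one]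
  exact ((hf.derivWithin (m := 1) (by norm_num)).differentiableAt one_ne_zero).hasDerivAt

lemma hasDerivAt_translationSurface_fst (hf : HasDerivAt f f' (a * x + b * y))
    (hg : HasDerivAt g g' (c * x + d * y)) :
    HasDerivAt (fun s => translationSurface f g a b c d s y) (a * f' + c * g') x :=
  hf.comp_linear_fst.add hg.comp_linear_fst

lemma hasDerivAt_translationSurface_snd (hf : HasDerivAt f f' (a * x + b * y))
    (hg : HasDerivAt g g' (c * x + d * y)) :
    HasDerivAt (fun t => translationSurface f g a b c d x t) (b * f' + d * g') y :=
  hf.comp_linear_snd.add hg.comp_linear_snd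

lemma deriv_deriv_translationSurface_fst_snd (hf : ContDiffAt ℝ 2 f (a * x + b * y))
    (hg : ContDiffAt ℝ 2 g (c * x + d * y)) :
    deriv (fun t => deriv (fun s => translationSurface f g a b c d s t) x) y =
      a * b * iteratedDeriv 2 f (a * x + b * y) + c * d * iteratedDeriv 2 g (c * x + d * y) := by
  have hfirst : (fun t => deriv (fun s => translationSurface f g a b c d s t) x) =ᶠ[𝓝 y]
      fun t => a * deriv f (a * x + b * t) + c * deriv g (c * x + d * t) := by
    filter_upwards [eventually_comp_linear_snd hf.eventually_hasDerivAt,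
      eventually_comp_linear_snd hg.eventually_hasDerivAt] with t hft hgt
    exact (hasDerivAt_translationSurface_fst hft hgt).deriv
  rw [hfirst.deriv_eq]
  exact (((hf.hasDerivAt_deriv.comp_linear_snd.const_mul a).add
    (hg.hasDerivAt_deriv.comp_linear_snd.const_mul c)).congr_deriv (by ring)).deriv

lemma deriv_deriv_translationSurface_fst_fst (hf : ContDiffAt ℝ 2 f (a * x + b * y))
    (hg : ContDiffAt ℝ 2 g (c * x + d * y)) :
    deriv (fun t => deriv (fun s => translationSurface f g a b c d s y) t) x =
      a ^ 2 * iteratedDeriv 2 f (a * x + b * y) + c ^ 2 * iteratedDeriv 2 g (c * x + d * y) := by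
  have hfirst : (fun t => deriv (fun s => translationSurface f g a b c d s y) t) =ᶠ[𝓝 x]
      fun t => a * deriv f (a * t + b * y) + c * deriv g (c * t + d * y) := by
    filter_upwards [eventually_comp_linear_fst hf.eventually_hasDerivAt,
      eventually_comp_linear_fst hg.eventually_hasDerivAt] with t hft hgt
    exact (hasDerivAt_translationSurface_fst hft hgt).deriv
  rw [hfirst.deriv_eq]
  exact (((hf.hasDerivAt_deriv.comp_linear_fst.const_mul a).add
    (hg.hasDerivAt_deriv.comp_linear_fst.const_mul c)).congr_deriv (by ring)).deriv

lemma deriv_deriv_translationSurface_snd_snd (hf : ContDiffAt ℝ 2 f (a * x + b * y))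
    (hg : ContDiffAt ℝ 2 g (c * x + d * y)) :
    deriv (fun t => deriv (fun s => translationSurface f g a b c d x s) t) y =
      b ^ 2 * iteratedDeriv 2 f (a * x + b * y) + d ^ 2 * iteratedDeriv 2 g (c * x + d * y) := by
  have hfirst : (fun t => deriv (fun s => translationSurface f g a b c d x s) t) =ᶠ[𝓝 y]
      fun t => b * deriv f (a * x + b * t) + d * deriv g (c * x + d * t) := by
    filter_upwards [eventually_comp_linear_snd hf.eventually_hasDerivAt,
      eventually_comp_linear_snd hg.eventually_hasDerivAt] with t hft hgt
    exact (hasDerivAt_translationSurface_snd hft hgt).deriv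
  rw [hfirst.deriv_eq]
  exact (((hf.hasDerivAt_deriv.comp_linear_snd.const_mul b).add
    (hg.hasDerivAt_deriv.comp_linear_snd.const_mul d)).congr_deriv (by ring)).deriv

lemma lapII_translationSurface (hdet : a * d - b * c ≠ 0)
    (hf : ContDiffAt ℝ 2 f (a * x + b * y)) (hg : ContDiffAt ℝ 2 g (c * x + d * y))
    (hf₂ : iteratedDeriv 2 f (a * x + b * y) ≠ 0) (hg₂ : iteratedDeriv 2 g (c * x + d * y) ≠ 0) :
    lapII f g a b c d (translationSurface f g a b c d) x y =
      (deriv f (a * x + b * y) *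
          (iteratedDeriv 3 f (a * x + b * y) / iteratedDeriv 2 f (a * x + b * y) ^ 2) +
        deriv g (c * x + d * y) *
          (iteratedDeriv 3 g (c * x + d * y) / iteratedDeriv 2 g (c * x + d * y) ^ 2)) / 2 - 2 := by
  have hfd := (hf.differentiableAt two_ne_zero).hasDerivAt
  have hgd := (hg.differentiableAt two_ne_zero).hasDerivAt
  rw [lapII, (hasDerivAt_translationSurface_fst hfd hgd).deriv,
    (hasDerivAt_translationSurface_snd hfd hgd).deriv,
    deriv_deriv_translationSurface_fst_snd hf hg, deriv_deriv_translationSurface_fst_fst hf hg,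
    deriv_deriv_translationSurface_snd_snd hf hg]
  -- `field_simp` would normalise the argument `c * x + d * y` and no longer see `hg₂`.
  generalize iteratedDeriv 2 f (a * x + b * y) = F₂ at hf₂ ⊢
  generalize iteratedDeriv 2 g (c * x + d * y) = G₂ at hg₂ ⊢
  generalize deriv f (a * x + b * y) = F₁
  generalize deriv g (c * x + d * y) = G₁
  generalize iteratedDeriv 3 f (a * x + b * y) = F₃
  generalize iteratedDeriv 3 g (c * x + d * y) = G₃
  field_simp
  ring

lemma lapII_coord_fst (hdet : a * d - b * c ≠ 0) (hf₂ : iteratedDeriv 2 f (a * x + b * y) ≠ 0)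
    (hg₂ : iteratedDeriv 2 g (c * x + d * y) ≠ 0) :
    lapII f g a b c d (fun s _ => s) x y =
      (d * (iteratedDeriv 3 f (a * x + b * y) / iteratedDeriv 2 f (a * x + b * y) ^ 2) -
        b * (iteratedDeriv 3 g (c * x + d * y) / iteratedDeriv 2 g (c * x + d * y) ^ 2)) /
        (2 * (a * d - b * c)) := by
  simp only [lapII, deriv_id'', deriv_const]
  generalize iteratedDeriv 2 f (a * x + b * y) = F₂ at hf₂ ⊢
  generalize iteratedDeriv 2 g (c * x + d * y) = G₂ at hg₂ ⊢
  field_simp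
  ring

lemma lapII_coord_snd (hdet : a * d - b * c ≠ 0) (hf₂ : iteratedDeriv 2 f (a * x + b * y) ≠ 0)
    (hg₂ : iteratedDeriv 2 g (c * x + d * y) ≠ 0) :
    lapII f g a b c d (fun _ t => t) x y =
      (a * (iteratedDeriv 3 g (c * x + d * y) / iteratedDeriv 2 g (c * x + d * y) ^ 2) -
        c * (iteratedDeriv 3 f (a * x + b * y) / iteratedDeriv 2 f (a * x + b * y) ^ 2)) /
        (2 * (a * d - b * c)) := by
  simp only [lapII, deriv_id'', deriv_const]
  generalize iteratedDeriv 2 f (a * x + b * y) = F₂ at hf₂ ⊢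
  generalize iteratedDeriv 2 g (c * x + d * y) = G₂ at hg₂ ⊢
  field_simp
  ring

end TranslationSurface

lemma iteratedDeriv_two_log (x : ℝ) : iteratedDeriv 2 log x = -(x ^ 2)⁻¹ := by
  rw [iteratedDeriv_succ, iteratedDeriv_one, deriv_log']
  simp [(deriv_inv : deriv (fun y : ℝ => y⁻¹) x = _)]

lemma iteratedDeriv_two_log_ne_zero {x : ℝ} (hx : x ≠ 0) : iteratedDeriv 2 log x ≠ 0 := by
  simpa [iteratedDeriv_two_log] using hx

lemma iteratedDeriv_three_log {x : ℝ} (hx : x ≠ 0) : iteratedDeriv 3 log x = 2 * (x ^ 3)⁻¹ := by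
  have h2 : iteratedDeriv 2 log = fun y => -(y ^ 2)⁻¹ := funext iteratedDeriv_two_log
  rw [iteratedDeriv_succ, h2]
  refine (((hasDerivAt_pow 2 x).inv (pow_ne_zero 2 hx)).neg.congr_deriv ?_).deriv
  field_simp
  ring

lemma iteratedDeriv_three_log_div_sq {x : ℝ} (hx : x ≠ 0) :
    iteratedDeriv 3 log x / iteratedDeriv 2 log x ^ 2 = 2 * x := by
  rw [iteratedDeriv_two_log, iteratedDeriv_three_log hx]
  field_simp

lemma deriv_log_mul_iteratedDeriv_three_log_div_sq {x : ℝ} (hx : x ≠ 0) :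
    deriv log x * (iteratedDeriv 3 log x / iteratedDeriv 2 log x ^ 2) = 2 := by
  rw [iteratedDeriv_three_log_div_sq hx, deriv_log]
  field_simp

theorem stmt18 : ∀ x y : ℝ, 2 * x + y > 0 → x - y > 0 →
    ((-1 : ℝ) * (iteratedDeriv 3 Real.log (2 * x + y) /
        (iteratedDeriv 2 Real.log (2 * x + y)) ^ 2) -
      (1 : ℝ) * (iteratedDeriv 3 Real.log (x - y) /
        (iteratedDeriv 2 Real.log (x - y)) ^ 2) =
      2 * ((2 : ℝ) * (-1) - 1 * 1) * 1 * x) ∧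
    (-(1 : ℝ) * (iteratedDeriv 3 Real.log (2 * x + y) /
        (iteratedDeriv 2 Real.log (2 * x + y)) ^ 2) +
      (2 : ℝ) * (iteratedDeriv 3 Real.log (x - y) /
        (iteratedDeriv 2 Real.log (x - y)) ^ 2) =
      2 * ((2 : ℝ) * (-1) - 1 * 1) * 1 * y) ∧
    lapII Real.log Real.log 2 1 1 (-1) (fun s _ => s) x y = x ∧
    lapII Real.log Real.log 2 1 1 (-1) (fun _ t => t) x y = y ∧
    lapII Real.log Real.log 2 1 1 (-1)
      (fun s t => Real.log (2 * s + t) + Real.log (s - t)) x y = 0 := by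
  intro x y hu hv
  have hu₀ : 2 * x + 1 * y ≠ 0 := by linarith
  have hv₀ : 1 * x + -1 * y ≠ 0 := by linarith
  have hu₂ := iteratedDeriv_two_log_ne_zero hu₀
  have hv₂ := iteratedDeriv_two_log_ne_zero hv₀
  have hdet : (2 : ℝ) * -1 - 1 * 1 ≠ 0 := by norm_num
  have hz : (fun s t => log (2 * s + t) + log (s - t)) = translationSurface log log 2 1 1 (-1) := by
    funext s t
    simp [translationSurface, sub_eq_add_neg]
  refine ⟨?_, ?_, ?_, ?_, ?_⟩
  · rw [iteratedDeriv_three_log_div_sq hu.ne', iteratedDeriv_three_log_div_sq hv.ne']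
    ring
  · rw [iteratedDeriv_three_log_div_sq hu.ne', iteratedDeriv_three_log_div_sq hv.ne']
    ring
  · rw [lapII_coord_fst hdet hu₂ hv₂, iteratedDeriv_three_log_div_sq hu₀,
      iteratedDeriv_three_log_div_sq hv₀]
    ring
  · rw [lapII_coord_snd hdet hu₂ hv₂, iteratedDeriv_three_log_div_sq hu₀,
      iteratedDeriv_three_log_div_sq hv₀]
    ring
  · rw [hz, lapII_translationSurface hdet (contDiffAt_log.2 hu₀) (contDiffAt_log.2 hv₀) hu₂ hv₂,
      deriv_log_mul_iteratedDeriv_three_log_div_sq hu₀,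
      deriv_log_mul_iteratedDeriv_three_log_div_sq hv₀]
    norm_num
end
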